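/- arXiv:2602.19209 — 2 statements merged into one kernel-verified Lean document; each statement's English description precedes it below -/
import Mathlib

section
/- Let (A, A₀) be a semiring pair satisfying Property N with e = 1 + 1† and b† = 1†b, and let b ∈ A, n ≥ 1. Setting g_{b,n}(λ) = Σ_{j=0}^{n-1} b^{n-1-j} λ^j, one has (λ + b†)·g_{b,n}(λ) = λⁿ + (bⁿ)† + Σ_{j=1}^{n-1} (b^j + (b^j)†) λ^{n-j} in A[λ]; consequently λⁿ + (bⁿ)† ⪯₀ (λ + b†)·g_{b,n}(λ), where f ⪯₀ g means g = f + h for some h with all coefficients in A₀. -/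
/-!
Both `λ · g_{b,n}` and `b · g_{b,n}` are sums of the monomials `b^j λ^(n-j)`: the first over
`0 ≤ j < n`, the second over `1 ≤ j ≤ n`. Hence `(λ + b†) g_{b,n}` is `λⁿ + (bⁿ)†` plus the
middle terms `(b^j + (b^j)†) λ^(n-j)`, whose coefficients lie in `A₀` by Property N.
-/

open Polynomial Finset

section GeomPoly

variable {R : Type*} [CommSemiring R] (b : R) (n : ℕ)

lemma sum_C_pow_mul_X_pow_reflect :
    ∑ j ∈ range n, C (b ^ (n - 1 - j)) * X ^ j = ∑ j ∈ range n, C (b ^ j) * X ^ (n - 1 - j) := by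
  rw [← sum_range_reflect (fun j ↦ C (b ^ j) * X ^ (n - 1 - j))]
  refine sum_congr rfl fun j hj ↦ ?_
  rw [Nat.sub_sub_self (by grind)]

lemma X_mul_sum_C_pow_mul_X_pow :
    X * ∑ j ∈ range n, C (b ^ (n - 1 - j)) * X ^ j = ∑ j ∈ range n, C (b ^ j) * X ^ (n - j) := by
  rw [sum_C_pow_mul_X_pow_reflect, mul_sum]
  refine sum_congr rfl fun j hj ↦ ?_
  rw [mul_left_comm, ← pow_succ', show n - 1 - j + 1 = n - j by grind]

lemma C_mul_sum_C_pow_mul_X_pow :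
    C b * ∑ j ∈ range n, C (b ^ (n - 1 - j)) * X ^ j
      = ∑ j ∈ Ico 1 (n + 1), C (b ^ j) * X ^ (n - j) := by
  rw [sum_C_pow_mul_X_pow_reflect, mul_sum, sum_Ico_eq_sum_range, Nat.add_sub_cancel]
  refine sum_congr rfl fun j _ ↦ ?_
  rw [← mul_assoc, ← C_mul, ← pow_succ', Nat.sub_sub, add_comm 1 j]

theorem X_add_C_mul_sum_C_pow_mul_X_pow (d : R) (hn : 1 ≤ n) :
    (X + C (d * b)) * ∑ j ∈ range n, C (b ^ (n - 1 - j)) * X ^ j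
      = X ^ n + C (d * b ^ n) + ∑ j ∈ Ico 1 n, C (b ^ j + d * b ^ j) * X ^ (n - j) := by
  rw [add_mul, X_mul_sum_C_pow_mul_X_pow, C_mul, mul_assoc, C_mul_sum_C_pow_mul_X_pow,
    sum_range_eq_add_Ico _ hn, sum_Ico_succ_top hn]
  simp only [pow_zero, C_1, one_mul, mul_one, Nat.sub_zero, Nat.sub_self, C_add, C_mul, add_mul,
    sum_add_distrib, mul_assoc, ← mul_sum, mul_add]
  abel

end GeomPoly

lemma coeff_sum_C_mul_X_pow_mem {R : Type*} [Semiring R] (S : AddSubmonoid R) {ι : Type*}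
    (s : Finset ι) (c : ι → R) (e : ι → ℕ) (hc : ∀ i ∈ s, c i ∈ S) (k : ℕ) :
    (∑ i ∈ s, C (c i) * X ^ e i).coeff k ∈ S := by
  rw [finsetSum_coeff]
  refine S.sum_mem fun i hi ↦ ?_
  rw [coeff_C_mul_X_pow]
  split_ifs
  · exact hc i hi
  · exact S.zero_mem

theorem stmt17_general {A : Type*} [CommSemiring A] (A₀ : Set A) (h0 : (0 : A) ∈ A₀)
    (haddc : ∀ x ∈ A₀, ∀ y ∈ A₀, x + y ∈ A₀)
    (d : A)
    (hcirc : ∀ c : A, c + d * c ∈ A₀)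
    (b : A) (n : ℕ) (hn : 1 ≤ n) :
    ((X + C (d * b)) * (∑ j ∈ Finset.range n, C (b ^ (n - 1 - j)) * X ^ j)
        = X ^ n + C (d * b ^ n)
          + ∑ j ∈ Finset.Ico 1 n, C (b ^ j + d * b ^ j) * X ^ (n - j)) ∧
    ∃ h : Polynomial A, (∀ k, h.coeff k ∈ A₀) ∧
      (X + C (d * b)) * (∑ j ∈ Finset.range n, C (b ^ (n - 1 - j)) * X ^ j)
        = (X ^ n + C (d * b ^ n)) + h := by
  have hprod := X_add_C_mul_sum_C_pow_mul_X_pow b n d hn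
  let S : AddSubmonoid A := ⟨⟨A₀, fun hx hy ↦ haddc _ hx _ hy⟩, h0⟩
  exact ⟨hprod, _, coeff_sum_C_mul_X_pow_mem S _ _ _ fun j _ ↦ hcirc (b ^ j),
    by rw [hprod, add_assoc]⟩

open Polynomial in
/-- `(λ + b†)·g_{b,n}(λ) = λⁿ + (bⁿ)† + Σ_{j=1}^{n-1} (b^j + (b^j)†) λ^{n-j}`,
and consequently `λⁿ + (bⁿ)† ⪯₀ (λ + b†)·g_{b,n}(λ)`. -/
theorem stmt17 {A : Type*} [CommSemiring A] (A₀ : Set A) (h0 : (0 : A) ∈ A₀)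
    (haddc : ∀ x ∈ A₀, ∀ y ∈ A₀, x + y ∈ A₀)
    (hmulc : ∀ (a : A), ∀ x ∈ A₀, a * x ∈ A₀)
    (d : A) (hd : IsUnit d) (he : (1 : A) + d ∈ A₀)
    (hcirc : ∀ c : A, c + d * c ∈ A₀)
    (b : A) (n : ℕ) (hn : 1 ≤ n) :
    ((X + C (d * b)) * (∑ j ∈ Finset.range n, C (b ^ (n - 1 - j)) * X ^ j)
        = X ^ n + C (d * b ^ n)
          + ∑ j ∈ Finset.Ico 1 n, C (b ^ j + d * b ^ j) * X ^ (n - j)) ∧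
    ∃ h : Polynomial A, (∀ k, h.coeff k ∈ A₀) ∧
      (X + C (d * b)) * (∑ j ∈ Finset.range n, C (b ^ (n - 1 - j)) * X ^ j)
        = (X ^ n + C (d * b ^ n)) + h :=
  stmt17_general A₀ h0 haddc d hcirc b n hn
end

section
/- If vectors v₁, ..., v_n in Aⁿ over a commutative semiring A satisfy v_n = v₁ + ... + v_{n-1}, then the n×n matrix M whose rows are v₁, ..., v_n is singular, in the sense that Det₊(M) = Det₋(M), where Det₊ (resp. Det₋) is the sum of products Π m_{π(i),i} over even (resp. odd) permutations π. -/
/-!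
Both signed track sums are additive in a single row, so expanding the last row splits `M` into
`n` matrices, each with two equal rows. For such a matrix, composing with the transposition of
those rows is a bijection between even and odd permutations that preserves each track product.
-/

open Finset

namespace Matrix

variable {ι A : Type*} [Fintype ι] [DecidableEq ι] [CommSemiring A]

/-- `signedTrackSum 1 M` and `signedTrackSum (-1) M` are the paper's `Det₊ M` and `Det₋ M`. -/
def signedTrackSum (s : ℤˣ) (M : Matrix ι ι A) : A :=
  ∑ π : Equiv.Perm ι, if Equiv.Perm.sign π = s then ∏ i, M (π i) i else 0

lemma prod_perm_eq_sum_prod_updateRow {M : Matrix ι ι A} {κ : Type*} {t : Finset κ}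
    {v : κ → ι → A} {r : ι} (h : M r = ∑ k ∈ t, v k) (π : Equiv.Perm ι) :
    ∏ i, M (π i) i = ∑ k ∈ t, ∏ i, M.updateRow r (v k) (π i) i := by
  have reindex (N : Matrix ι ι A) : ∏ i, N (π i) i = ∏ i, N i (π.symm i) := by
    simpa using (Equiv.prod_comp π.symm fun i => N (π i) i).symm
  simp only [reindex, Fintype.prod_eq_mul_prod_compl r, h, Finset.sum_apply, Finset.sum_mul,
    updateRow_self]
  refine sum_congr rfl fun k _ => congrArg _ (prod_congr rfl fun i hi => ?_)
  rw [updateRow_ne (by simpa using hi)]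

lemma signedTrackSum_eq_sum_updateRow {M : Matrix ι ι A} {κ : Type*} {t : Finset κ}
    {v : κ → ι → A} {r : ι} (h : M r = ∑ k ∈ t, v k) (s : ℤˣ) :
    signedTrackSum s M = ∑ k ∈ t, signedTrackSum s (M.updateRow r (v k)) := by
  unfold signedTrackSum
  rw [sum_comm]
  refine sum_congr rfl fun π _ => ?_
  split_ifs
  · exact prod_perm_eq_sum_prod_updateRow h π
  · exact sum_const_zero.symm

lemma signedTrackSum_eq_neg_of_rows_eq {M : Matrix ι ι A} {i j : ι} (hij : i ≠ j)
    (hM : M i = M j) (s : ℤˣ) :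
    signedTrackSum s M = signedTrackSum (-s) M := by
  have hswap (x : ι) : M (Equiv.swap i j x) = M x := by
    rw [Equiv.swap_apply_def]
    split_ifs <;> simp_all
  unfold signedTrackSum
  rw [← Equiv.sum_comp (Equiv.mulLeft (Equiv.swap i j))]
  refine sum_congr rfl fun π _ => ?_
  simp only [Equiv.coe_mulLeft, Equiv.Perm.sign_mul, Equiv.Perm.sign_swap hij,
    Equiv.Perm.mul_apply, hswap, neg_one_mul, neg_eq_iff_eq_neg]

end Matrix

/-- If the last row of a square matrix is the sum of the other rows, then the matrix is
singular: the sum of its even tracks equals the sum of its odd tracks. -/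
theorem stmt19 {A : Type*} [CommSemiring A] (n : ℕ)
    (M : Matrix (Fin (n + 1)) (Fin (n + 1)) A)
    (h : ∀ j, M (Fin.last n) j = ∑ i : Fin n, M i.castSucc j) :
    (∑ π : Equiv.Perm (Fin (n + 1)),
        if Equiv.Perm.sign π = 1 then ∏ i, M (π i) i else 0)
      = ∑ π : Equiv.Perm (Fin (n + 1)),
        if Equiv.Perm.sign π = -1 then ∏ i, M (π i) i else 0 := by
  change M.signedTrackSum 1 = M.signedTrackSum (-1)
  have hlast : M (Fin.last n) = ∑ i : Fin n, M i.castSucc :=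
    funext fun j => (h j).trans (Finset.sum_apply _ _ _).symm
  rw [Matrix.signedTrackSum_eq_sum_updateRow hlast, Matrix.signedTrackSum_eq_sum_updateRow hlast]
  refine Finset.sum_congr rfl fun k _ => ?_
  have hne : k.castSucc ≠ Fin.last n := (Fin.castSucc_lt_last k).ne
  exact Matrix.signedTrackSum_eq_neg_of_rows_eq hne
    (by rw [Matrix.updateRow_ne hne, Matrix.updateRow_self]) 1
end
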